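/- Let X be a real Banach space and let x ∈ S_X be a Daugavet point. Then for every slice S of B_X and every ε > 0 there exists a slice T of B_X with T ⊆ S such that ‖x − z‖ > 2 − ε for every z ∈ T. -/

import Mathlib

/-!
Apply the Daugavet property to the slice `S(f, t)` with `t` small to get `y` in it with
`‖x - y‖ > 2 - t`, and let `g` be a norming functional of `y - x`; then `y` lies in `S(g, t)`
while `g x < t - 1`. Since `‖f + g‖ ≥ f y + g y > 2 - 2t`, on the slice of the normalised
functional `(f + g) / ‖f + g‖` both `f` and `g` exceed `1 - 4t`, so this slice lies in `S(f, α)`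
and every `z` in it satisfies `‖x - z‖ ≥ g z - g x > 2 - 5t`.
-/
variable {X : Type*} [NormedAddCommGroup X] [NormedSpace ℝ X] [CompleteSpace X]

/-- The slice `S(f, α)` of the closed unit ball of `X`. -/
def ballSlice (f : X →L[ℝ] ℝ) (α : ℝ) : Set X := {y | ‖y‖ ≤ 1 ∧ f y > 1 - α}

/-- `x` is a Daugavet point: for every slice of the unit ball and every `ε > 0`
there is a point of the slice at distance `> 2 - ε` from `x`. -/
def IsDaugavetPoint (x : X) : Prop :=
  ∀ (f : X →L[ℝ] ℝ), ‖f‖ = 1 → ∀ α : ℝ, 0 < α →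
    ∀ ε : ℝ, 0 < ε → ∃ y ∈ ballSlice f α, ‖x - y‖ > 2 - ε

section

variable {E : Type*} [NormedAddCommGroup E] [NormedSpace ℝ E]

theorem ballSlice_mono (f : E →L[ℝ] ℝ) {α β : ℝ} (h : α ≤ β) : ballSlice f α ⊆ ballSlice f β :=
  fun _ ⟨hz, hfz⟩ => ⟨hz, by linarith⟩

theorem abs_apply_le_of_norm_le_one {φ : E →L[ℝ] ℝ} (hφ : ‖φ‖ ≤ 1) {z : E} (hz : ‖z‖ ≤ 1) :
    |φ z| ≤ 1 :=
  (φ.le_opNorm_of_le hz).trans (by simpa using hφ)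

theorem exists_norm_eq_one_mem_ballSlice_of_lt_norm_sub {x y : E} (hx : ‖x‖ ≤ 1) (hy : ‖y‖ ≤ 1)
    {t : ℝ} (ht : t ≤ 2) (hxy : 2 - t < ‖x - y‖) :
    ∃ g : E →L[ℝ] ℝ, ‖g‖ = 1 ∧ y ∈ ballSlice g t ∧ g x < t - 1 := by
  rw [norm_sub_rev] at hxy
  obtain ⟨g, hg, hgyx⟩ := exists_dual_vector ℝ (y - x) (by linarith)
  have hgx := abs_le.1 (abs_apply_le_of_norm_le_one hg.le hx)
  have hgy := abs_le.1 (abs_apply_le_of_norm_le_one hg.le hy)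
  have hsep : 2 - t < g y - g x := by rw [← map_sub, hgyx]; exact hxy
  exact ⟨g, hg, ⟨hy, by linarith⟩, by linarith⟩

theorem mul_one_sub_lt_of_mem_ballSlice_inv_norm_smul {φ : E →L[ℝ] ℝ} (hφ : φ ≠ 0) {t : ℝ}
    {z : E} (hz : z ∈ ballSlice (‖φ‖⁻¹ • φ) t) : ‖φ‖ * (1 - t) < φ z := by
  have hpos := norm_pos_iff.2 hφ
  have h := hz.2
  rw [smul_apply, smul_eq_mul] at h
  rwa [gt_iff_lt, lt_inv_mul_iff₀ hpos] at h

theorem exists_ballSlice_subset_inter {f g : E →L[ℝ] ℝ} (hf : ‖f‖ ≤ 1) (hg : ‖g‖ ≤ 1) {t : ℝ}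
    (ht : t < 1) {y : E} (hyf : y ∈ ballSlice f t) (hyg : y ∈ ballSlice g t) :
    ∃ h : E →L[ℝ] ℝ, ‖h‖ = 1 ∧ ballSlice h t ⊆ ballSlice f (4 * t) ∩ ballSlice g (4 * t) := by
  have hfy := abs_le.1 (abs_apply_le_of_norm_le_one hf hyf.1)
  have ht0 : 0 ≤ t := by linarith [hyf.2]
  have hsum_y : f y + g y ≤ ‖f + g‖ :=
    (le_abs_self _).trans (((f + g).le_opNorm_of_le hyf.1).trans (mul_one _).le)
  have hsum_le : ‖f + g‖ ≤ 2 := (norm_add_le f g).trans (by linarith)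
  have hfg : f + g ≠ 0 := by
    rintro h0
    rw [h0, norm_zero] at hsum_y
    linarith [hyf.2, hyg.2]
  refine ⟨‖f + g‖⁻¹ • (f + g), by simpa using norm_smul_inv_norm (𝕜 := ℝ) hfg, fun z hz => ?_⟩
  have hsum_z := mul_one_sub_lt_of_mem_ballSlice_inv_norm_smul hfg hz
  rw [add_apply] at hsum_z
  have hdepth : ‖f + g‖ - 2 * t ≤ ‖f + g‖ * (1 - t) := by nlinarith
  have hfz := abs_le.1 (abs_apply_le_of_norm_le_one hf hz.1)
  have hgz := abs_le.1 (abs_apply_le_of_norm_le_one hg hz.1)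
  exact ⟨⟨hz.1, by linarith [hyf.2, hyg.2]⟩, ⟨hz.1, by linarith [hyf.2, hyg.2]⟩⟩

end

theorem daugavet_point_nested_slices (x : X) (hx : ‖x‖ = 1) (hD : IsDaugavetPoint x)
    (f : X →L[ℝ] ℝ) (hf : ‖f‖ = 1) (α : ℝ) (hα : 0 < α) (ε : ℝ) (hε : 0 < ε) :
    ∃ (g : X →L[ℝ] ℝ) (α₁ : ℝ), ‖g‖ = 1 ∧ 0 < α₁ ∧
      ballSlice g α₁ ⊆ ballSlice f α ∧ ∀ z ∈ ballSlice g α₁, ‖x - z‖ > 2 - ε := by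
  set t := min α (min ε 1) / 5
  have ht : 0 < t := by positivity
  have htα : 4 * t ≤ α := by grind
  have htε : 5 * t ≤ ε := by grind
  have ht1 : t < 1 := by grind
  obtain ⟨y, hyf, hxy⟩ := hD f hf t ht t ht
  obtain ⟨g, hg, hyg, hgx⟩ :=
    exists_norm_eq_one_mem_ballSlice_of_lt_norm_sub hx.le hyf.1 (by linarith) hxy
  obtain ⟨h, hh, hsub⟩ := exists_ballSlice_subset_inter hf.le hg.le ht1 hyf hyg
  refine ⟨h, t, hh, ht, fun z hz => ballSlice_mono f htα (hsub hz).1, fun z hz => ?_⟩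
  have hgz := (hsub hz).2.2
  calc 2 - ε ≤ 2 - 5 * t := by linarith
    _ < g z - g x := by linarith
    _ = g (z - x) := (map_sub g z x).symm
    _ ≤ ‖x - z‖ := by
      rw [norm_sub_rev]
      exact (le_abs_self _).trans (g.le_of_opNorm_le hg.le _ |>.trans_eq (one_mul _))
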